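/- arXiv:1711.05627 — 7 statements merged into one kernel-verified Lean document; each statement's English description precedes it below -/
import Mathlib

section
/- Let X₊ and X₋ be finite disjoint subsets of ℝⁿ. If the convex hull of X₊ is disjoint from X₋, then there exist m, weights w_i ∈ ℝⁿ, biases b_i ∈ ℝ, coefficients a_i ≤ 0, and c ≥ 0 such that f(x) = ∑ a_i·max(0, ⟨w_i, x⟩ + b_i) + c satisfies f(x) > 0 for all x ∈ X₊ and f(x) < 0 for all x ∈ X₋. -/
/-!
Each point `y` of `Xm` lies outside the compact convex set `convexHull ℝ Xp`, so Hahn–Banach gives an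
affine function `ℓ_y` that is `≤ 0` on `Xp` and equals `1` at `y`. The network
`1 - 2 ∑_y max 0 (ℓ_y x)` is then `1` on `Xp` and at most `-1` on `Xm`.
-/

open Finset Matrix

lemma ContinuousLinearMap.apply_eq_dotProduct {ι : Type*} [Fintype ι] [DecidableEq ι]
    (f : (ι → ℝ) →L[ℝ] ℝ) (x : ι → ℝ) : f x = (fun j => f (Pi.single j 1)) ⬝ᵥ x := by
  conv_lhs => rw [pi_eq_sum_univ' x]
  simp only [map_sum, map_smul, smul_eq_mul, dotProduct, mul_comm]

lemma exists_affine_nonpos_of_notMem_convexHull {ι : Type*} [Fintype ι] [DecidableEq ι]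
    {s : Set (ι → ℝ)} (hs : s.Finite) {y : ι → ℝ} (hy : y ∉ convexHull ℝ s) :
    ∃ (w : ι → ℝ) (b : ℝ), (∀ x ∈ s, w ⬝ᵥ x + b ≤ 0) ∧ w ⬝ᵥ y + b = 1 := by
  obtain ⟨f, u, hfs, hfy⟩ := geometric_hahn_banach_closed_point (convex_convexHull ℝ s)
    (hs.isCompact_convexHull (𝕜 := ℝ)).isClosed hy
  have hd : 0 < f y - u := sub_pos.mpr hfy
  refine ⟨(f y - u)⁻¹ • fun j => f (Pi.single j 1), -u / (f y - u), fun x hx => ?_, ?_⟩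
  · have hfx : f x < u := hfs x (subset_convexHull ℝ s hx)
    rw [smul_dotProduct, ← f.apply_eq_dotProduct, smul_eq_mul, ← div_eq_inv_mul, ← add_div]
    exact div_nonpos_of_nonpos_of_nonneg (by linarith) hd.le
  · rw [smul_dotProduct, ← f.apply_eq_dotProduct, smul_eq_mul, ← div_eq_inv_mul, ← add_div,
      ← sub_eq_add_neg, div_self hd.ne']

lemma sum_max_zero_eq_zero_of_nonpos {ι : Type*} [Fintype ι] {v : ι → ℝ} (hv : ∀ i, v i ≤ 0) :
    ∑ i, max 0 (v i) = 0 :=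
  sum_eq_zero fun i _ => max_eq_left (hv i)

lemma le_sum_max_zero {ι : Type*} [Fintype ι] (v : ι → ℝ) (i : ι) : v i ≤ ∑ j, max 0 (v j) :=
  (le_max_right 0 (v i)).trans <|
    single_le_sum (f := fun j => max 0 (v j)) (fun j _ => le_max_left 0 (v j)) (mem_univ i)

theorem convexly_separable_implies_scrn_separator_general (n : ℕ) (Xp Xm : Set (Fin n → ℝ))
    (hfp : Xp.Finite) (hfm : Xm.Finite)
    (hsep : Disjoint (convexHull ℝ Xp) Xm) :
    ∃ (m : ℕ) (w : Fin m → Fin n → ℝ) (b a : Fin m → ℝ) (c : ℝ),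
      (∀ i, a i ≤ 0) ∧ 0 ≤ c ∧
      (∀ x ∈ Xp, 0 < (∑ i, a i * max 0 (∑ j, w i j * x j + b i)) + c) ∧
      (∀ x ∈ Xm, (∑ i, a i * max 0 (∑ j, w i j * x j + b i)) + c < 0) := by
  have : Finite Xm := hfm
  obtain ⟨m, ⟨e⟩⟩ := Finite.exists_equiv_fin Xm
  choose W B hWXp hWy using fun y : Xm =>
    exists_affine_nonpos_of_notMem_convexHull hfp (Set.disjoint_right.mp hsep y.2)
  refine ⟨m, fun i => W (e.symm i), fun i => B (e.symm i), fun _ => -2, 1,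
    fun _ => by norm_num, zero_le_one, fun x hx => ?_, fun y hy => ?_⟩
  · change 0 < ∑ i, -2 * max 0 (W (e.symm i) ⬝ᵥ x + B (e.symm i)) + 1
    rw [← mul_sum, sum_max_zero_eq_zero_of_nonpos fun i => hWXp (e.symm i) x hx]
    norm_num
  · have hy_sum := le_sum_max_zero (fun i => W (e.symm i) ⬝ᵥ y + B (e.symm i)) (e ⟨y, hy⟩)
    simp only [Equiv.symm_apply_apply, hWy] at hy_sum
    change ∑ i, -2 * max 0 (W (e.symm i) ⬝ᵥ y + B (e.symm i)) + 1 < 0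
    rw [← mul_sum]
    linarith

/-- If the convex hull of the finite set `Xp` is disjoint from the finite set `Xm` (and the
two sets are disjoint), then there is a sign-constrained single-hidden-layer rectifier
network separating `Xp` (positive) from `Xm` (negative). -/
theorem convexly_separable_implies_scrn_separator (n : ℕ) (Xp Xm : Set (Fin n → ℝ))
    (hfp : Xp.Finite) (hfm : Xm.Finite) (hdisj : Disjoint Xp Xm)
    (hsep : Disjoint (convexHull ℝ Xp) Xm) :
    ∃ (m : ℕ) (w : Fin m → Fin n → ℝ) (b a : Fin m → ℝ) (c : ℝ),
      (∀ i, a i ≤ 0) ∧ 0 ≤ c ∧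
      (∀ x ∈ Xp, 0 < (∑ i, a i * max 0 (∑ j, w i j * x j + b i)) + c) ∧
      (∀ x ∈ Xm, (∑ i, a i * max 0 (∑ j, w i j * x j + b i)) + c < 0) :=
  convexly_separable_implies_scrn_separator_general n Xp Xm hfp hfm hsep
end

section
/- Let f(x) = ∑_{i=1}^m a_i·max(0, ⟨w_i, x⟩ + b_i) + c with a_i ≤ 0 and suppose f(x) > 0 on a finite set X₊ and f(x) < 0 on a finite set X₋. For I ⊆ {1,...,m}, let f_I(x) = ∑_{i∈I} a_i·(⟨w_i, x⟩ + b_i) + c and X₋^I = {x ∈ X₋ : f_I(x) < 0}. Then X₋ equals the union over all I ⊆ {1,...,m} of X₋^I, and for each I, f_I is an affine function separating X₊ (where f_I > 0) from X₋^I (where f_I < 0); consequently CH(X₋^I) ∩ CH(X₊) = ∅. -/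
/-- Decomposition of the negative pattern set by a sign-constrained single-hidden-layer
separator: `Xm` is the union of the pieces `Xm^I = {x ∈ Xm : f_I x < 0}`, each affine
`f_I` is positive on `Xp` and negative on `Xm^I`, and the convex hulls of `Xm^I` and `Xp`
are disjoint. -/
theorem scrn_decomposition (n m : ℕ) (w : Fin m → Fin n → ℝ) (b a : Fin m → ℝ) (c : ℝ)
    (ha : ∀ i, a i ≤ 0)
    (Xp Xm : Set (Fin n → ℝ)) (hfp : Xp.Finite) (hfm : Xm.Finite)
    (hp : ∀ x ∈ Xp, 0 < (∑ i, a i * max 0 (∑ j, w i j * x j + b i)) + c)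
    (hm : ∀ x ∈ Xm, (∑ i, a i * max 0 (∑ j, w i j * x j + b i)) + c < 0) :
    (Xm = ⋃ I : Finset (Fin m),
        {x ∈ Xm | (∑ i ∈ I, a i * ((∑ j, w i j * x j) + b i)) + c < 0}) ∧
    (∀ I : Finset (Fin m),
      (∀ x ∈ Xp, 0 < (∑ i ∈ I, a i * ((∑ j, w i j * x j) + b i)) + c) ∧
      (∀ x ∈ {x ∈ Xm | (∑ i ∈ I, a i * ((∑ j, w i j * x j) + b i)) + c < 0},
        (∑ i ∈ I, a i * ((∑ j, w i j * x j) + b i)) + c < 0) ∧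
      Disjoint
        (convexHull ℝ {x ∈ Xm | (∑ i ∈ I, a i * ((∑ j, w i j * x j) + b i)) + c < 0})
        (convexHull ℝ Xp)) := by
  -- key pointwise bound: for any I, f x ≤ f_I x
  have key : ∀ (I : Finset (Fin m)) (x : Fin n → ℝ),
      (∑ i, a i * max 0 (∑ j, w i j * x j + b i)) + c ≤
      (∑ i ∈ I, a i * ((∑ j, w i j * x j) + b i)) + c := by
    intro I x
    gcongr ?_ + c
    calc (∑ i, a i * max 0 (∑ j, w i j * x j + b i))
        ≤ ∑ i ∈ I, a i * max 0 (∑ j, w i j * x j + b i) := by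
          have := Finset.sum_le_sum_of_subset_of_nonneg (f := fun i =>
              -(a i * max 0 (∑ j, w i j * x j + b i))) (I.subset_univ)
            (fun i _ _ => by
              have : a i * max 0 (∑ j, w i j * x j + b i) ≤ 0 :=
                mul_nonpos_of_nonpos_of_nonneg (ha i) (le_max_left 0 _)
              linarith)
          simp only [Finset.sum_neg_distrib] at this
          linarith
      _ ≤ ∑ i ∈ I, a i * ((∑ j, w i j * x j) + b i) := by
          apply Finset.sum_le_sum
          intro i _
          exact mul_le_mul_of_nonpos_left (le_max_right 0 _) (ha i)
  constructor
  · ext x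
    simp only [Set.mem_iUnion, Set.mem_setOf_eq]
    constructor
    · intro hx
      refine ⟨Finset.univ.filter (fun i => 0 ≤ ∑ j, w i j * x j + b i), hx, ?_⟩
      have : (∑ i ∈ Finset.univ.filter (fun i => 0 ≤ ∑ j, w i j * x j + b i),
          a i * ((∑ j, w i j * x j) + b i)) =
          ∑ i, a i * max 0 (∑ j, w i j * x j + b i) := by
        rw [Finset.sum_filter]
        apply Finset.sum_congr rfl
        intro i _
        by_cases h : 0 ≤ ∑ j, w i j * x j + b i
        · simp [h, max_eq_right h]
        · push_neg at h
          simp [h, max_eq_left h.le, not_le.mpr h]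
      rw [this]
      exact hm x hx
    · rintro ⟨I, hx, _⟩; exact hx
  · intro I
    have hlin : IsLinearMap ℝ (fun x : Fin n → ℝ => ∑ i ∈ I, a i * (∑ j, w i j * x j)) := by
      constructor
      · intro x y
        rw [← Finset.sum_add_distrib]
        apply Finset.sum_congr rfl
        intro i _
        simp only [Pi.add_apply]
        rw [← mul_add, ← Finset.sum_add_distrib]
        congr 1
        apply Finset.sum_congr rfl
        intro j _; ring
      · intro t x
        rw [Finset.smul_sum]
        apply Finset.sum_congr rfl
        intro i _
        simp only [Pi.smul_apply, smul_eq_mul, Finset.mul_sum]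
        apply Finset.sum_congr rfl
        intro j _; ring
    have hrw : ∀ x : Fin n → ℝ, (∑ i ∈ I, a i * ((∑ j, w i j * x j) + b i)) + c =
        (∑ i ∈ I, a i * (∑ j, w i j * x j)) + ((∑ i ∈ I, a i * b i) + c) := by
      intro x
      have h : ∀ i ∈ I, a i * ((∑ j, w i j * x j) + b i) =
          a i * (∑ j, w i j * x j) + a i * b i := fun i _ => by ring
      rw [Finset.sum_congr rfl h, Finset.sum_add_distrib]
      ring
    set r : ℝ := -((∑ i ∈ I, a i * b i) + c) with hr
    have hppos : ∀ x ∈ Xp, 0 < (∑ i ∈ I, a i * ((∑ j, w i j * x j) + b i)) + c :=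
      fun x hx => lt_of_lt_of_le (hp x hx) (key I x)
    refine ⟨hppos, fun x hx => hx.2, ?_⟩
    have h1 : {x ∈ Xm | (∑ i ∈ I, a i * ((∑ j, w i j * x j) + b i)) + c < 0} ⊆
        {x | (∑ i ∈ I, a i * (∑ j, w i j * x j)) < r} := by
      intro x hx
      have := hx.2
      rw [hrw x] at this
      simp only [Set.mem_setOf_eq, hr]; linarith
    have h2 : Xp ⊆ {x | r < (∑ i ∈ I, a i * (∑ j, w i j * x j))} := by
      intro x hx
      have := hppos x hx
      rw [hrw x] at this
      simp only [Set.mem_setOf_eq, hr]; linarith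
    have c1 := convexHull_min h1 (convex_halfSpace_lt hlin r)
    have c2 := convexHull_min h2 (convex_halfSpace_gt hlin r)
    refine Set.disjoint_left.mpr fun x hx1 hx2 => ?_
    have t1 := c1 hx1
    have t2 := c2 hx2
    simp only [Set.mem_setOf_eq] at t1 t2
    linarith
end

section
/- Let X₊, X₋ be finite disjoint subsets of ℝⁿ. Then there exist parameters W₁ ∈ ℝ^{n×l₁}, b₁ ∈ ℝ^{l₁}, W₂ ∈ ℝ^{l₁×l₂} with all entries ≤ 0, b₂ ∈ ℝ^{l₂} with all entries ≥ 0, a ∈ ℝ^{l₂} with all entries ≤ 0, and c ≥ 0, such that f(x) = ⟨a, max(0, W₂ᵀ max(0, W₁ᵀx + b₁) + b₂)⟩ + c satisfies f(x) > 0 for all x ∈ X₊ and f(x) < 0 for all x ∈ X₋. -/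
namespace SCRNaux

noncomputable section
open Finset

def sgn : Fin 2 → ℝ := fun s => if s = 0 then 1 else -1

def e1 (l2 n : ℕ) : (Fin l2 × Fin n × Fin 2) ≃ Fin (l2 * (n * 2)) :=
  (Equiv.prodCongr (Equiv.refl _) finProdFinEquiv).trans finProdFinEquiv

def W1def (n l2 : ℕ) (j : Fin (l2 * (n * 2))) (k : Fin n) : ℝ :=
  if k = ((e1 l2 n).symm j).2.1 then sgn ((e1 l2 n).symm j).2.2 else 0

def b1def (n l2 : ℕ) (m : Fin l2 → Fin n → ℝ) (j : Fin (l2 * (n * 2))) : ℝ :=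
  -(sgn ((e1 l2 n).symm j).2.2 * m ((e1 l2 n).symm j).1 ((e1 l2 n).symm j).2.1)

def W2def (n l2 : ℕ) (M : Fin l2 → ℝ) (j : Fin (l2 * (n * 2))) (i : Fin l2) : ℝ :=
  if ((e1 l2 n).symm j).1 = i then -(M i) else 0

lemma relu_abs (t : ℝ) : max 0 t + max 0 (-t) = |t| := by
  rcases le_total 0 t with h | h
  · rw [max_eq_right h, max_eq_left (neg_nonpos.mpr h), abs_of_nonneg h, add_zero]
  · rw [max_eq_left h, max_eq_right (neg_nonneg.mpr h), abs_of_nonpos h, zero_add]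

lemma key (n l2 : ℕ) (m : Fin l2 → Fin n → ℝ) (M : Fin l2 → ℝ) (i : Fin l2) (x : Fin n → ℝ) :
    ∑ j, W2def n l2 M j i * max 0 ((∑ k, W1def n l2 j k * x k) + b1def n l2 m j)
      = -(M i * ∑ q, |x q - m i q|) := by
  classical
  have hinner : ∀ t : Fin l2 × Fin n × Fin 2,
      (∑ k, (if k = t.2.1 then sgn t.2.2 else 0) * x k) + (-(sgn t.2.2 * m t.1 t.2.1))
        = sgn t.2.2 * (x t.2.1 - m t.1 t.2.1) := by
    intro t
    have h1 : (∑ k, (if k = t.2.1 then sgn t.2.2 else 0) * x k) = sgn t.2.2 * x t.2.1 := by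
      simp [ite_mul]
    rw [h1]; ring
  rw [← Equiv.sum_comp (e1 l2 n)
      (fun j => W2def n l2 M j i * max 0 ((∑ k, W1def n l2 j k * x k) + b1def n l2 m j))]
  simp only [W1def, b1def, W2def, Equiv.symm_apply_apply]
  simp only [Fintype.sum_prod_type]
  have h2 : ∀ (p : Fin l2) (q : Fin n) (s : Fin 2),
      (∑ k, (if k = q then sgn s else 0) * x k) + (-(sgn s * m p q))
        = sgn s * (x q - m p q) := fun p q s => hinner (p, q, s)
  simp only [h2]
  rw [Finset.sum_eq_single i]
  · simp only [if_pos rfl, Fin.sum_univ_two]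
    have hs0 : sgn 0 = 1 := rfl
    have hs1 : sgn 1 = -1 := rfl
    simp only [hs0, hs1, if_true]
    have h3 : ∀ q, (-(M i)) * max 0 ((1:ℝ) * (x q - m i q))
        + (-(M i)) * max 0 ((-1:ℝ) * (x q - m i q)) = -(M i) * |x q - m i q| := by
      intro q
      rw [one_mul, neg_one_mul, ← mul_add, relu_abs]
    simp only [h3]
    rw [← Finset.mul_sum, neg_mul]
  · intro b _ hb
    simp [if_neg hb]
  · intro h
    exact absurd (Finset.mem_univ i) h

end
end SCRNaux

/-- Universal classification power of sign-constrained two-hidden-layer rectifier networks: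
any two finite disjoint sets `Xp, Xm ⊆ ℝⁿ` can be separated by a network with nonpositive
second-layer and output weights and nonnegative second-layer biases and output bias. -/
theorem two_hidden_layer_scrn_universal (n : ℕ) (Xp Xm : Set (Fin n → ℝ))
    (hfp : Xp.Finite) (hfm : Xm.Finite) (hdisj : Disjoint Xp Xm) :
    ∃ (l1 l2 : ℕ) (W1 : Fin l1 → Fin n → ℝ) (b1 : Fin l1 → ℝ)
      (W2 : Fin l1 → Fin l2 → ℝ) (b2 : Fin l2 → ℝ) (a : Fin l2 → ℝ) (c : ℝ),
      (∀ j i, W2 j i ≤ 0) ∧ (∀ i, 0 ≤ b2 i) ∧ (∀ i, a i ≤ 0) ∧ 0 ≤ c ∧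
      (∀ x ∈ Xp, 0 <
        (∑ i, a i * max 0 ((∑ j, W2 j i * max 0 ((∑ k, W1 j k * x k) + b1 j)) + b2 i)) + c) ∧
      (∀ x ∈ Xm,
        (∑ i, a i * max 0 ((∑ j, W2 j i * max 0 ((∑ k, W1 j k * x k) + b1 j)) + b2 i)) + c < 0) := by
  classical
  set Fp := hfp.toFinset with hFp
  set Fm := hfm.toFinset with hFm
  set l2 := Fm.card with hl2
  set e2 : Fin l2 ≃ Fm := Fm.equivFin.symm with he2
  set m : Fin l2 → Fin n → ℝ := fun i => (e2 i : Fin n → ℝ) with hm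
  have hmXm : ∀ i, m i ∈ Xm := fun i => hfm.mem_toFinset.mp (e2 i).2
  set D : Fin l2 → (Fin n → ℝ) → ℝ := fun i x => ∑ q, |x q - m i q| with hD
  have Dnonneg : ∀ i x, 0 ≤ D i x := fun i x => Finset.sum_nonneg fun q _ => abs_nonneg _
  have Dpos : ∀ i, ∀ x ∈ Xp, 0 < D i x := by
    intro i x hx
    rcases (Dnonneg i x).lt_or_eq with h | h
    · exact h
    · exfalso
      have hzero := (Finset.sum_eq_zero_iff_of_nonneg
        (fun q (_ : q ∈ Finset.univ) => abs_nonneg (x q - m i q))).mp h.symm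
      have hxm : x = m i := by
        funext q
        have := hzero q (Finset.mem_univ q)
        have := abs_eq_zero.mp this
        linarith [this]
      exact (Set.disjoint_left.mp hdisj hx) (hxm ▸ hmXm i)
  set M : Fin l2 → ℝ := fun i => ((Fp.sup fun x => ⌈(D i x)⁻¹⌉₊ : ℕ) : ℝ) with hM
  have Mnonneg : ∀ i, 0 ≤ M i := fun i => Nat.cast_nonneg _
  have hMD : ∀ i, ∀ x ∈ Xp, 1 ≤ M i * D i x := by
    intro i x hx
    have hx' : x ∈ Fp := hfp.mem_toFinset.mpr hx
    have h1 : (D i x)⁻¹ ≤ M i := le_trans (Nat.le_ceil _)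
      (Nat.cast_le.mpr (Finset.le_sup (f := fun x => ⌈(D i x)⁻¹⌉₊) hx'))
    calc (1:ℝ) = (D i x)⁻¹ * D i x := (inv_mul_cancel₀ (Dpos i x hx).ne').symm
      _ ≤ M i * D i x := mul_le_mul_of_nonneg_right h1 (Dnonneg i x)
  refine ⟨l2 * (n * 2), l2, SCRNaux.W1def n l2, SCRNaux.b1def n l2 m,
    SCRNaux.W2def n l2 M, fun _ => 1, fun _ => -1, 1/2, ?_, ?_, ?_, ?_, ?_, ?_⟩
  · intro j i
    unfold SCRNaux.W2def
    split
    · exact neg_nonpos.mpr (Mnonneg i)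
    · exact le_refl 0
  · intro i; exact zero_le_one
  · intro i; exact neg_nonpos.mpr zero_le_one
  · norm_num
  · intro x hx
    have hk : ∀ i : Fin l2,
        (∑ j, SCRNaux.W2def n l2 M j i *
          max 0 ((∑ k, SCRNaux.W1def n l2 j k * x k) + SCRNaux.b1def n l2 m j)) + 1
          = -(M i * D i x) + 1 := fun i => by rw [SCRNaux.key n l2 m M i x]
    simp only [hk]
    have hz : ∀ i : Fin l2, (-1 : ℝ) * max 0 (-(M i * D i x) + 1) = 0 := by
      intro i
      have := hMD i x hx
      rw [max_eq_left (by linarith)]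
      ring
    rw [Finset.sum_congr rfl fun i _ => hz i, Finset.sum_const]
    norm_num
  · intro x hx
    have hk : ∀ i : Fin l2,
        (∑ j, SCRNaux.W2def n l2 M j i *
          max 0 ((∑ k, SCRNaux.W1def n l2 j k * x k) + SCRNaux.b1def n l2 m j)) + 1
          = -(M i * D i x) + 1 := fun i => by rw [SCRNaux.key n l2 m M i x]
    simp only [hk]
    set i0 : Fin l2 := e2.symm ⟨x, hfm.mem_toFinset.mpr hx⟩ with hi0
    have hmi0 : m i0 = x := by
      simp only [hm, hi0, Equiv.apply_symm_apply]
    have hDi0 : D i0 x = 0 := by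
      simp [hD, hmi0]
    have hge : max 0 (-(M i0 * D i0 x) + 1) ≤ ∑ i, max 0 (-(M i * D i x) + 1) :=
      Finset.single_le_sum (f := fun i => max 0 (-(M i * D i x) + 1))
        (fun i _ => le_max_left _ _) (Finset.mem_univ i0)
    have h1 : (1:ℝ) ≤ ∑ i, max 0 (-(M i * D i x) + 1) := by
      rw [hDi0] at hge
      simpa using hge
    have h2 : ∑ i, (-1:ℝ) * max 0 (-(M i * D i x) + 1)
        = -∑ i, max 0 (-(M i * D i x) + 1) := by
      rw [← Finset.sum_neg_distrib]
      simp [neg_one_mul]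
    rw [h2]
    linarith
end

section
/- Let X₁, ..., X_m be finite subsets of ℝⁿ that are pairwise mutually convexly separable, i.e., CH(X_i) ∩ X_j = ∅ for all i ≠ j. Then for each k there exists a single-hidden-layer rectifier classifier f_k(x) = ⟨a_k, max(0, Wᵀx + b)⟩ + c_k with a_k having all entries ≤ 0, such that f_k(x) > 0 for all x ∈ X_k and f_k(x) < 0 for all x in the union of the other sets. -/
/-!
Fix a class `k`. Every point `y` of another class lies outside the compact convex hull of `X k`,
so Hahn–Banach gives an affine functional that is `≤ 0` on `X k` and equals `1` at `y`; take one
rectifier unit per such pair `(k, y)`. Output `k` is `1 - 2 ∑ max 0 (unit)`, the sum running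
over the units attached to `k`: on `X k` all of them vanish, while at a foreign point `y` the
unit attached to `(k, y)` alone already brings the output down to `-1`.
-/

open Finset

theorem exists_affine_nonpos_on_eq_one_of_notMem_convexHull {E : Type*} [TopologicalSpace E]
    [AddCommGroup E] [Module ℝ E] [IsTopologicalAddGroup E] [ContinuousSMul ℝ E]
    [LocallyConvexSpace ℝ E] [T2Space E] {s : Set E} (hs : s.Finite) {y : E}
    (hy : y ∉ convexHull ℝ s) :
    ∃ (f : StrongDual ℝ E) (β : ℝ), (∀ x ∈ s, f x + β ≤ 0) ∧ f y + β = 1 := by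
  obtain ⟨f, u, hf_hull, hf_y⟩ :=
    geometric_hahn_banach_closed_point (convex_convexHull ℝ s) (hs.isClosed_convexHull ℝ) hy
  have hd : 0 < f y - u := sub_pos.2 hf_y
  refine ⟨(f y - u)⁻¹ • f, -u / (f y - u), fun x hx => ?_, ?_⟩
  · have hx_lt : f x < u := hf_hull x (subset_convexHull ℝ s hx)
    calc ((f y - u)⁻¹ • f) x + -u / (f y - u) = (f x - u) / (f y - u) := by
          simp only [smul_apply, smul_eq_mul]; ring
      _ ≤ 0 := div_nonpos_of_nonpos_of_nonneg (by linarith) hd.le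
  · simp only [smul_apply, smul_eq_mul]
    field_simp
    ring

theorem LinearMap.sum_apply_single_one_mul {ι R : Type*} [Fintype ι] [DecidableEq ι]
    [CommSemiring R] (f : (ι → R) →ₗ[R] R) (x : ι → R) :
    ∑ j, f (Pi.single j 1) * x j = f x := by
  conv_rhs => rw [← univ_sum_single x, map_sum]
  refine sum_congr rfl fun j _ => ?_
  rw [mul_comm, ← smul_eq_mul, ← map_smul, ← Pi.single_smul, smul_eq_mul, mul_one]

theorem exists_affine_family_separating_points_from_convexHull {κ E : Type*} [Fintype κ]
    [TopologicalSpace E] [AddCommGroup E] [Module ℝ E] [IsTopologicalAddGroup E]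
    [ContinuousSMul ℝ E] [LocallyConvexSpace ℝ E] [T2Space E] (X Y : κ → Set E)
    (hX : ∀ k, (X k).Finite) (hY : ∀ k, (Y k).Finite)
    (hXY : ∀ k, Disjoint (convexHull ℝ (X k)) (Y k)) :
    ∃ (l : ℕ) (label : Fin l → κ) (f : Fin l → StrongDual ℝ E) (β : Fin l → ℝ),
      (∀ i, ∀ x ∈ X (label i), f i x + β i ≤ 0) ∧
      ∀ k, ∀ y ∈ Y k, ∃ i, label i = k ∧ f i y + β i = 1 := by
  have hsep : ∀ p : Σ k, (hY k).toFinset, ∃ (f : StrongDual ℝ E) (β : ℝ),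
      (∀ x ∈ X p.1, f x + β ≤ 0) ∧ f p.2 + β = 1 := fun ⟨k, y, hy⟩ =>
    exists_affine_nonpos_on_eq_one_of_notMem_convexHull (hX k)
      (Set.disjoint_right.1 (hXY k) ((hY k).mem_toFinset.1 hy))
  choose f β hf_nonpos hf_one using hsep
  let e := (Fintype.equivFin (Σ k, (hY k).toFinset)).symm
  refine ⟨_, fun i => (e i).1, fun i => f (e i), fun i => β (e i),
    fun i => hf_nonpos (e i), fun k y hy => ?_⟩
  refine ⟨e.symm ⟨k, y, (hY k).mem_toFinset.2 hy⟩, by simp, ?_⟩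
  simpa using hf_one ⟨k, y, (hY k).mem_toFinset.2 hy⟩

theorem exists_nonpos_output_weights_separating {ι κ E : Type*} [Fintype ι] [DecidableEq κ]
    (X Y : κ → Set E) (label : ι → κ) (φ : ι → E → ℝ)
    (hφ_nonpos : ∀ i, ∀ x ∈ X (label i), φ i x ≤ 0)
    (hφ_one : ∀ k, ∀ y ∈ Y k, ∃ i, label i = k ∧ 1 ≤ φ i y) :
    ∃ (a : κ → ι → ℝ) (c : κ → ℝ), (∀ k i, a k i ≤ 0) ∧ (∀ k, 0 ≤ c k) ∧
      (∀ k, ∀ x ∈ X k, 0 < (∑ i, a k i * max 0 (φ i x)) + c k) ∧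
      (∀ k, ∀ y ∈ Y k, (∑ i, a k i * max 0 (φ i y)) + c k < 0) := by
  set a : κ → ι → ℝ := fun k i => if label i = k then -2 else 0
  have ha : ∀ k i, a k i ≤ 0 := fun k i => by dsimp only [a]; split_ifs <;> norm_num
  refine ⟨a, fun _ => 1, ha, fun _ => zero_le_one, fun k x hx => ?_, fun k y hy => ?_⟩
  · have hvanish : ∀ i, a k i * max 0 (φ i x) = 0 := fun i => by
      by_cases hi : label i = k
      · rw [max_eq_left (hφ_nonpos i x (hi ▸ hx)), mul_zero]
      · simp [a, hi]
    simp [hvanish]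
  · classical
    obtain ⟨i₀, hi₀, hφ⟩ := hφ_one k y hy
    have hterm_nonpos : ∀ i, a k i * max 0 (φ i y) ≤ 0 := fun i =>
      mul_nonpos_of_nonpos_of_nonneg (ha k i) (le_max_left _ _)
    have hunit : a k i₀ * max 0 (φ i₀ y) ≤ -2 := by
      simp only [a, hi₀, if_true]
      nlinarith [le_max_right 0 (φ i₀ y)]
    have hrest : ∑ i ∈ univ.erase i₀, a k i * max 0 (φ i y) ≤ 0 :=
      sum_nonpos fun i _ => hterm_nonpos i
    rw [← add_sum_erase _ _ (mem_univ i₀)]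
    linarith

/-- If finitely many finite pattern sets are pairwise mutually convexly separable, then they
can be separated by a sign-constrained single-hidden-layer rectifier network with a shared
hidden layer: for each class `k` there are nonpositive output weights `a k` and bias `c k ≥ 0`
so that output `k` is positive exactly on its own class and negative on all others. -/
theorem multiclass_scrn_separator_exists (n m : ℕ) (X : Fin m → Set (Fin n → ℝ))
    (hfin : ∀ k, (X k).Finite)
    (hsep : ∀ i j, i ≠ j → Disjoint (convexHull ℝ (X i)) (X j)) :
    ∃ (l : ℕ) (W : Fin l → Fin n → ℝ) (b : Fin l → ℝ) (a : Fin m → Fin l → ℝ)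
      (c : Fin m → ℝ),
      (∀ k i, a k i ≤ 0) ∧ (∀ k, 0 ≤ c k) ∧
      (∀ k, ∀ x ∈ X k,
        0 < (∑ i, a k i * max 0 ((∑ j, W i j * x j) + b i)) + c k) ∧
      (∀ k k', k' ≠ k → ∀ x ∈ X k',
        (∑ i, a k i * max 0 ((∑ j, W i j * x j) + b i)) + c k < 0) := by
  set others : Fin m → Set (Fin n → ℝ) := fun k => ⋃ k' ≠ k, X k'
  have hothers_fin : ∀ k, (others k).Finite := fun k =>
    Set.finite_iUnion fun k' => Set.finite_iUnion fun _ => hfin k'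
  have hdisj : ∀ k, Disjoint (convexHull ℝ (X k)) (others k) := fun k =>
    Set.disjoint_iUnion₂_right.2 fun k' hk' => hsep k k' (Ne.symm hk')
  obtain ⟨l, label, f, b, hf_nonpos, hf_one⟩ :=
    exists_affine_family_separating_points_from_convexHull X others hfin hothers_fin hdisj
  set W : Fin l → Fin n → ℝ := fun i j => f i (Pi.single j 1)
  have hW : ∀ i x, ∑ j, W i j * x j = f i x := fun i x =>
    (f i).toLinearMap.sum_apply_single_one_mul x
  obtain ⟨a, c, ha, hc, hpos, hneg⟩ :=
    exists_nonpos_output_weights_separating X others label (fun i x => ∑ j, W i j * x j + b i)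
      (fun i x hx => by simpa only [hW] using hf_nonpos i x hx)
      (fun k y hy => by simpa only [hW] using (hf_one k y hy).imp fun _ h => ⟨h.1, h.2.ge⟩)
  exact ⟨l, W, b, a, c, ha, hc, hpos, fun k k' hk' x hx =>
    hneg k x (Set.mem_biUnion hk' hx)⟩
end

section
/- If an m-output sign-constrained single-hidden-layer rectifier network (each output f_k(x) = ⟨a_k, max(0, Wᵀx + b)⟩ + c_k with a_k ⪯ 0) separates finite sets X₁, ..., X_m (f_k > 0 on X_k and f_k < 0 on the other sets), then CH(X_i) ∩ X_j = ∅ for all i ≠ j. -/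
/-!
Each output of a sign-constrained rectifier network is concave: a hidden unit
`max 0 (⟨w, x⟩ + β)` is convex and enters with a nonpositive weight. A concave function attains
its minimum over the convex hull of a set on the set itself, so output `i`, which is positive on
`X i`, stays positive on `convexHull (X i)` and cannot vanish or turn negative on a point of `X j`.
-/

open Finset

lemma ConcaveOn.finset_sum {𝕜 E β ι : Type*} [Semiring 𝕜] [PartialOrder 𝕜] [AddCommMonoid E]
    [AddCommMonoid β] [PartialOrder β] [IsOrderedAddMonoid β] [SMul 𝕜 E] [Module 𝕜 β]
    {s : Set E} (hs : Convex 𝕜 s) {f : ι → E → β} (t : Finset ι)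
    (hf : ∀ i ∈ t, ConcaveOn 𝕜 s (f i)) : ConcaveOn 𝕜 s fun x => ∑ i ∈ t, f i x := by
  classical
  induction t using Finset.induction with
  | empty => simpa using concaveOn_const (0 : β) hs
  | insert i t hi ih =>
    simp only [Finset.sum_insert hi]
    exact (hf i (mem_insert_self i t)).add (ih fun j hj => hf j (mem_insert_of_mem hj))

lemma ConvexOn.const_mul_of_nonpos {E : Type*} [AddCommMonoid E] [SMul ℝ E] {s : Set E}
    {f : E → ℝ} (hf : ConvexOn ℝ s f) {a : ℝ} (ha : a ≤ 0) :
    ConcaveOn ℝ s fun x => a * f x :=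
  neg_convexOn_iff.1 <| (hf.smul (neg_nonneg.2 ha)).congr fun x _ => by simp

lemma convexOn_max_zero_affine {ι : Type*} [Fintype ι] (w : ι → ℝ) (β : ℝ) :
    ConvexOn ℝ Set.univ fun x : ι → ℝ => max 0 ((∑ j, w j * x j) + β) := by
  have hlin : ConvexOn ℝ Set.univ fun x : ι → ℝ => ∑ j, w j * x j :=
    ((∑ j, w j • LinearMap.proj (R := ℝ) (φ := fun _ : ι => ℝ) j).convexOn convex_univ).congr
      fun x _ => by simp
  exact (convexOn_const 0 convex_univ).sup (hlin.add_const β)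

lemma concaveOn_relu_network_of_nonpos {ι κ : Type*} [Fintype ι] [Fintype κ]
    (W : κ → ι → ℝ) (b a : κ → ℝ) (c : ℝ) (ha : ∀ i, a i ≤ 0) :
    ConcaveOn ℝ Set.univ fun x : ι → ℝ =>
      (∑ i, a i * max 0 ((∑ j, W i j * x j) + b i)) + c :=
  (ConcaveOn.finset_sum convex_univ univ fun i _ =>
    (convexOn_max_zero_affine (W i) (b i)).const_mul_of_nonpos (ha i)).add_const c

lemma ConcaveOn.disjoint_convexHull_of_lt {E : Type*} [AddCommGroup E] [Module ℝ E]
    {f : E → ℝ} (hf : ConcaveOn ℝ Set.univ f) {s t : Set E}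
    (hst : ∀ x ∈ s, ∀ y ∈ t, f y < f x) : Disjoint (convexHull ℝ s) t := by
  rw [Set.disjoint_left]
  intro y hy hyt
  obtain ⟨x, hx, hxy⟩ := hf.exists_le_of_mem_convexHull (Set.subset_univ s) hy
  exact (hst x hx y hyt).not_ge hxy

theorem multiclass_scrn_separator_necessity_general (n m l : ℕ) (X : Fin m → Set (Fin n → ℝ))
    (W : Fin l → Fin n → ℝ) (b : Fin l → ℝ) (a : Fin m → Fin l → ℝ) (c : Fin m → ℝ)
    (ha : ∀ k i, a k i ≤ 0)
    (hpos : ∀ k, ∀ x ∈ X k,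
      0 < (∑ i, a k i * max 0 ((∑ j, W i j * x j) + b i)) + c k)
    (hneg : ∀ k k', k' ≠ k → ∀ x ∈ X k',
      (∑ i, a k i * max 0 ((∑ j, W i j * x j) + b i)) + c k < 0) :
    ∀ i j, i ≠ j → Disjoint (convexHull ℝ (X i)) (X j) := fun i j hij =>
  (concaveOn_relu_network_of_nonpos W b (a i) (c i) (ha i)).disjoint_convexHull_of_lt
    fun x hx y hy => (hneg i j hij.symm y hy).trans (hpos i x hx)

/-- If an `m`-output sign-constrained single-hidden-layer rectifier network separates finite
sets `X 1, ..., X m` (output `k` positive on `X k`, negative on the others), then the sets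
are pairwise mutually convexly separable. -/
theorem multiclass_scrn_separator_necessity (n m l : ℕ) (X : Fin m → Set (Fin n → ℝ))
    (hfin : ∀ k, (X k).Finite)
    (W : Fin l → Fin n → ℝ) (b : Fin l → ℝ) (a : Fin m → Fin l → ℝ) (c : Fin m → ℝ)
    (ha : ∀ k i, a k i ≤ 0)
    (hpos : ∀ k, ∀ x ∈ X k,
      0 < (∑ i, a k i * max 0 ((∑ j, W i j * x j) + b i)) + c k)
    (hneg : ∀ k k', k' ≠ k → ∀ x ∈ X k',
      (∑ i, a k i * max 0 ((∑ j, W i j * x j) + b i)) + c k < 0) :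
    ∀ i j, i ≠ j → Disjoint (convexHull ℝ (X i)) (X j) :=
  multiclass_scrn_separator_necessity_general n m l X W b a c ha hpos hneg
end

section
/- Consider f(x; W) = b₀ − ⟨1, max(0, W₂ᵀ max(0, W₁ᵀx + b₁) + b₂)⟩ with W₂ having all entries ≤ 0. For a fixed binary vector a₂ ∈ {0,1}^{l₂}, define f₂(x; W, a₂) = b₀ − ⟨a₂, W₂ᵀ max(0, W₁ᵀx + b₁) + b₂⟩. Then f₂(x; W, a₂) ≥ f(x; W) for all x, and for fixed x and fixed (b₀, W₂, b₂), the map (W₁, b₁) ↦ f₂(x; W, a₂) is convex. -/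
/-!
Since `a₂ᵢ ∈ {0, 1}`, each term `a₂ᵢ zᵢ` of `⟨a₂, z₂⟩` is at most `max 0 zᵢ`, which gives the upper
bound. For convexity, every first-layer unit `max 0 (⟨W₁ⱼ, x⟩ + b₁ⱼ)` is convex in `(W₁, b₁)`,
being the maximum of `0` and a linear function; multiplying by `W₂ⱼᵢ ≤ 0` makes it concave,
summing and scaling by `a₂ᵢ ≥ 0` keeps it concave, so `b₀` minus the result is convex.
-/

open Set

section Convexity

variable {𝕜 E β ι : Type*} [AddCommMonoid E] {s : Set E}

theorem ConvexOn.smul_of_nonpos [CommRing 𝕜] [PartialOrder 𝕜] [IsOrderedRing 𝕜] [SMul 𝕜 E]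
    [AddCommGroup β] [PartialOrder β] [IsOrderedAddMonoid β]
    [Module 𝕜 β] [PosSMulMono 𝕜 β] {f : E → β} {c : 𝕜} (hc : c ≤ 0) (hf : ConvexOn 𝕜 s f) :
    ConcaveOn 𝕜 s fun x => c • f x := by
  rw [← neg_convexOn_iff]
  simpa only [Pi.neg_def, neg_smul] using hf.smul (neg_nonneg.2 hc)

theorem concaveOn_finset_sum [Semiring 𝕜] [PartialOrder 𝕜] [SMul 𝕜 E] [AddCommMonoid β]
    [PartialOrder β] [IsOrderedAddMonoid β] [Module 𝕜 β] {t : Finset ι} {f : ι → E → β}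
    (hs : Convex 𝕜 s) (h : ∀ i ∈ t, ConcaveOn 𝕜 s (f i)) :
    ConcaveOn 𝕜 s fun x => ∑ i ∈ t, f i x := by
  induction t using Finset.cons_induction with
  | empty => simpa using concaveOn_const (0 : β) hs
  | cons i t _ ih =>
    simp only [Finset.sum_cons]
    exact (h i (Finset.mem_cons_self i t)).add (ih fun j hj => h j (Finset.mem_cons_of_mem hj))

end Convexity

theorem mul_le_max_zero {R : Type*} [Ring R] [LinearOrder R] [IsOrderedRing R] {a z : R}
    (ha₀ : 0 ≤ a) (ha₁ : a ≤ 1) : a * z ≤ max 0 z := by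
  rcases le_total 0 z with hz | hz
  · exact (mul_le_of_le_one_left hz ha₁).trans (le_max_right 0 z)
  · exact (mul_nonpos_of_nonneg_of_nonpos ha₀ hz).trans (le_max_left 0 z)

def preactivation {R ι κ : Type*} [CommSemiring R] [Fintype κ] (x : κ → R) (j : ι) :
    ((ι → κ → R) × (ι → R)) →ₗ[R] R where
  toFun p := ∑ k, p.1 j k * x k + p.2 j
  map_add' p q := by
    simp only [Prod.fst_add, Prod.snd_add, Pi.add_apply, add_mul, Finset.sum_add_distrib]
    ring
  map_smul' c p := by
    simp only [Prod.smul_fst, Prod.smul_snd, Pi.smul_apply, smul_eq_mul, RingHom.id_apply,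
      mul_add, Finset.mul_sum, mul_assoc]

theorem convexOn_max_zero_preactivation {ι κ : Type*} [Fintype κ] (x : κ → ℝ) (j : ι) :
    ConvexOn ℝ univ fun p => max 0 (preactivation x j p) :=
  (convexOn_const 0 convex_univ).sup ((preactivation x j).convexOn convex_univ)

/-- For a two-hidden-layer sign-constrained network with `W₂ ⪯ 0` and a fixed binary
second-layer activation pattern `a₂`, the function `f₂` (replacing the second-layer
rectifiers by the pattern `a₂`) upper bounds `f`, and `f₂` is convex in `(W₁, b₁)` for
fixed `x`, `b₀`, `W₂`, `b₂`. -/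
theorem f2_upper_bound_and_convex (n l1 l2 : ℕ) (x : Fin n → ℝ) (b0 : ℝ)
    (W2 : Fin l1 → Fin l2 → ℝ) (b2 : Fin l2 → ℝ) (a2 : Fin l2 → ℝ)
    (hW2 : ∀ j i, W2 j i ≤ 0) (ha2 : ∀ i, a2 i = 0 ∨ a2 i = 1) :
    (∀ (W1 : Fin l1 → Fin n → ℝ) (b1 : Fin l1 → ℝ),
      b0 - ∑ i, max 0 ((∑ j, W2 j i * max 0 ((∑ k, W1 j k * x k) + b1 j)) + b2 i) ≤
        b0 - ∑ i, a2 i * ((∑ j, W2 j i * max 0 ((∑ k, W1 j k * x k) + b1 j)) + b2 i)) ∧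
    ConvexOn ℝ Set.univ
      (fun p : (Fin l1 → Fin n → ℝ) × (Fin l1 → ℝ) =>
        b0 - ∑ i, a2 i * ((∑ j, W2 j i * max 0 ((∑ k, p.1 j k * x k) + p.2 j)) + b2 i)) := by
  have ha2_nonneg (i : Fin l2) : 0 ≤ a2 i := by rcases ha2 i with h | h <;> simp [h]
  have ha2_le_one (i : Fin l2) : a2 i ≤ 1 := by rcases ha2 i with h | h <;> simp [h]
  refine ⟨fun W1 b1 => sub_le_sub_left (Finset.sum_le_sum fun i _ =>
    mul_le_max_zero (ha2_nonneg i) (ha2_le_one i)) b0, ?_⟩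
  have hterm_concave (i : Fin l2) : ConcaveOn ℝ univ fun p : (Fin l1 → Fin n → ℝ) × (Fin l1 → ℝ) =>
      a2 i * ((∑ j, W2 j i * max 0 (preactivation x j p)) + b2 i) :=
    ((concaveOn_finset_sum convex_univ fun j _ =>
      (convexOn_max_zero_preactivation x j).smul_of_nonpos (hW2 j i)).add_const (b2 i)).smul
      (ha2_nonneg i)
  exact (convexOn_const b0 convex_univ).sub
    (concaveOn_finset_sum convex_univ fun i _ => hterm_concave i)
end

section
/- Let X₊, X₋ be finite subsets of ℝⁿ and f{g(x)} = ⟨a, max(0, W₂ᵀ g(x) + b₂)⟩ + c with g(x) = max(0, W₁ᵀx + b₁), where a ⪯ 0, c ≥ 0, W₂ ⪯ 0, b₂ ⪰ 0, and f{g(x)} > 0 on X₊, f{g(x)} < 0 on X₋. For I ⊆ {1,...,l₂} define f_I{g(x)} = ∑_{i∈I} a_i(⟨w_i, g(x)⟩ + b_i) + c and X₋^I = {x ∈ X₋ : f_I{g(x)} < 0}. Then X₋ is the union over all I of X₋^I, f_I{g(x)} > 0 on X₊ and f_I{g(x)} < 0 on X₋^I, and CH(X₋^I) ∩ X₊ =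 ∅ for every I. -/
/-!
Expanding `a i * (∑ j, W2 j i * g j + b2 i)` shows that `f_I ∘ g` is a combination of the hidden
ReLU units `g j` with coefficients `∑ i ∈ I, a i * W2 j i ≥ 0`, hence convex; its strict sublevel
set `{f_I ∘ g < 0}` is therefore convex, contains `Xm^I` and misses `Xp`. Since `a ⪯ 0`, dropping
the outer ReLU and the units outside `I` can only increase the network, so `f_I ∘ g > 0` on `Xp`;
and on each `x ∈ Xm` the choice `I = {i | the i-th unit is active at x}` reproduces `f (g x)`.
-/

open Finset Set

theorem ConvexOn.sum {𝕜 E β ι : Type*} [Semiring 𝕜] [PartialOrder 𝕜] [AddCommMonoid E]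
    [SMul 𝕜 E] [AddCommMonoid β] [PartialOrder β] [IsOrderedAddMonoid β] [Module 𝕜 β]
    {s : Set E} (hs : Convex 𝕜 s) (I : Finset ι) {f : ι → E → β}
    (hf : ∀ i ∈ I, ConvexOn 𝕜 s (f i)) : ConvexOn 𝕜 s (fun x => ∑ i ∈ I, f i x) := by
  classical
  induction I using Finset.induction_on with
  | empty => simpa using convexOn_const (0 : β) hs
  | insert i I hi ih =>
    simp only [Finset.sum_insert hi]
    exact (hf i (mem_insert_self i I)).add (ih fun j hj => hf j (mem_insert_of_mem hj))

theorem convexOn_max_zero_sum_mul_add {ι : Type*} [Fintype ι] (w : ι → ℝ) (b : ℝ) :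
    ConvexOn ℝ univ (fun x : ι → ℝ => max 0 ((∑ k, w k * x k) + b)) :=
  (convexOn_const 0 convex_univ).sup
    (((dotProductBilin ℝ ℝ w).convexOn convex_univ).add (convexOn_const b convex_univ))

theorem sum_mul_sum_mul_add_eq {ι κ : Type*} [Fintype ι] (a : κ → ℝ) (W : ι → κ → ℝ)
    (y : ι → ℝ) (b : κ → ℝ) (I : Finset κ) (c : ℝ) :
    ∑ i ∈ I, a i * ((∑ j, W j i * y j) + b i) + c
      = ∑ j, (∑ i ∈ I, a i * W j i) * y j + ((∑ i ∈ I, a i * b i) + c) := by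
  simp only [mul_add, Finset.sum_add_distrib, Finset.mul_sum, Finset.sum_mul]
  rw [Finset.sum_comm]
  ring_nf

theorem convexOn_sum_mul_affine_of_nonpos {ι κ E : Type*} [Fintype ι] [AddCommMonoid E]
    [Module ℝ E] {s : Set E} (hs : Convex ℝ s) {g : E → ι → ℝ}
    (hg : ∀ j, ConvexOn ℝ s (fun x => g x j)) {W : ι → κ → ℝ} (hW : ∀ j i, W j i ≤ 0)
    (b : κ → ℝ) {a : κ → ℝ} (ha : ∀ i, a i ≤ 0) (I : Finset κ) (c : ℝ) :
    ConvexOn ℝ s (fun x => ∑ i ∈ I, a i * ((∑ j, W j i * g x j) + b i) + c) := by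
  simp_rw [sum_mul_sum_mul_add_eq]
  refine (ConvexOn.sum hs univ fun j _ => (hg j).smul ?_).add (convexOn_const _ hs)
  exact Finset.sum_nonneg fun i _ => mul_nonneg_of_nonpos_of_nonpos (ha i) (hW j i)

theorem sum_mul_max_zero_le_sum_mul {ι : Type*} [Fintype ι] {a : ι → ℝ} (ha : ∀ i, a i ≤ 0)
    (t : ι → ℝ) (I : Finset ι) : ∑ i, a i * max 0 (t i) ≤ ∑ i ∈ I, a i * t i :=
  calc ∑ i, a i * max 0 (t i)
      ≤ ∑ i ∈ I, a i * max 0 (t i) :=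
        Finset.sum_le_sum_of_subset_of_nonpos' (subset_univ I)
          fun i _ _ => mul_nonpos_of_nonpos_of_nonneg (ha i) (le_max_left _ _)
    _ ≤ ∑ i ∈ I, a i * t i :=
        Finset.sum_le_sum fun i _ => mul_le_mul_of_nonpos_left (le_max_right _ _) (ha i)

theorem sum_filter_pos_mul_eq_sum_mul_max_zero {ι : Type*} [Fintype ι] (a t : ι → ℝ) :
    ∑ i ∈ univ.filter (fun i => 0 < t i), a i * t i = ∑ i, a i * max 0 (t i) := by
  rw [Finset.sum_filter]
  refine Finset.sum_congr rfl fun i _ => ?_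
  split_ifs with h
  · rw [max_eq_right h.le]
  · rw [max_eq_left (not_lt.1 h), mul_zero]

theorem ConvexOn.disjoint_convexHull_of_lt_of_le {E : Type*} [AddCommMonoid E] [Module ℝ E]
    {F : E → ℝ} (hF : ConvexOn ℝ univ F) {s t : Set E} {r : ℝ} (hs : ∀ x ∈ s, F x < r)
    (ht : ∀ y ∈ t, r ≤ F y) : Disjoint (convexHull ℝ s) t := by
  have hull_sub : convexHull ℝ s ⊆ {x | F x < r} :=
    convexHull_min (fun x hx => hs x hx) (by simpa using hF.convex_lt r)
  exact Set.disjoint_left.2 fun y hy hyt => (ht y hyt).not_gt (hull_sub hy)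

theorem two_hidden_layer_decomposition_general (n l1 l2 : ℕ)
    (W1 : Fin l1 → Fin n → ℝ) (b1 : Fin l1 → ℝ)
    (W2 : Fin l1 → Fin l2 → ℝ) (b2 : Fin l2 → ℝ) (a : Fin l2 → ℝ) (c : ℝ)
    (ha : ∀ i, a i ≤ 0) (hW2 : ∀ j i, W2 j i ≤ 0)
    (Xp Xm : Set (Fin n → ℝ))
    (hp : ∀ x ∈ Xp, 0 <
      (∑ i, a i * max 0 ((∑ j, W2 j i * max 0 ((∑ k, W1 j k * x k) + b1 j)) + b2 i)) + c)
    (hm : ∀ x ∈ Xm,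
      (∑ i, a i * max 0 ((∑ j, W2 j i * max 0 ((∑ k, W1 j k * x k) + b1 j)) + b2 i)) + c < 0) :
    (Xm = ⋃ I : Finset (Fin l2),
        {x ∈ Xm | (∑ i ∈ I, a i * ((∑ j, W2 j i * max 0 ((∑ k, W1 j k * x k) + b1 j)) + b2 i)) + c < 0}) ∧
    (∀ I : Finset (Fin l2),
      (∀ x ∈ Xp, 0 <
        (∑ i ∈ I, a i * ((∑ j, W2 j i * max 0 ((∑ k, W1 j k * x k) + b1 j)) + b2 i)) + c) ∧
      (∀ x ∈ {x ∈ Xm | (∑ i ∈ I, a i * ((∑ j, W2 j i * max 0 ((∑ k, W1 j k * x k) + b1 j)) + b2 i)) + c < 0},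
        (∑ i ∈ I, a i * ((∑ j, W2 j i * max 0 ((∑ k, W1 j k * x k) + b1 j)) + b2 i)) + c < 0) ∧
      Disjoint
        (convexHull ℝ {x ∈ Xm | (∑ i ∈ I, a i * ((∑ j, W2 j i * max 0 ((∑ k, W1 j k * x k) + b1 j)) + b2 i)) + c < 0})
        Xp) := by
  set g : (Fin n → ℝ) → Fin l1 → ℝ := fun x j => max 0 ((∑ k, W1 j k * x k) + b1 j)
  set t : (Fin n → ℝ) → Fin l2 → ℝ := fun x i => (∑ j, W2 j i * g x j) + b2 i
  have pos_on_Xp : ∀ I : Finset (Fin l2), ∀ x ∈ Xp, 0 < (∑ i ∈ I, a i * t x i) + c :=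
    fun I x hx => (hp x hx).trans_le (by linarith [sum_mul_max_zero_le_sum_mul ha (t x) I])
  have convex_fI : ∀ I : Finset (Fin l2), ConvexOn ℝ univ (fun x => (∑ i ∈ I, a i * t x i) + c) :=
    fun I => convexOn_sum_mul_affine_of_nonpos convex_univ
      (fun j => convexOn_max_zero_sum_mul_add (W1 j) (b1 j)) hW2 b2 ha I c
  refine ⟨?_, fun I => ⟨pos_on_Xp I, fun x hx => hx.2, ?_⟩⟩
  · ext x
    simp only [mem_iUnion, mem_ofPred_eq]
    refine ⟨fun hx => ⟨univ.filter (fun i => 0 < t x i), hx, ?_⟩, fun ⟨_, hx, _⟩ => hx⟩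
    rw [sum_filter_pos_mul_eq_sum_mul_max_zero]
    exact hm x hx
  · exact (convex_fI I).disjoint_convexHull_of_lt_of_le (fun x hx => hx.2)
      fun y hy => (pos_on_Xp I y hy).le

/-- Decomposition of the negative set by a two-hidden-layer sign-constrained separator:
with `g(x) = max(0, W₁ᵀx + b₁)`, each piece `Xm^I = {x ∈ Xm : f_I{g(x)} < 0}` covers `Xm`
as `I` ranges over the subsets of the top hidden units, `f_I{g(·)}` is positive on `Xp` and
negative on `Xm^I`, and each `Xm^I` is convexly separable from `Xp`. -/
theorem two_hidden_layer_decomposition (n l1 l2 : ℕ)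
    (W1 : Fin l1 → Fin n → ℝ) (b1 : Fin l1 → ℝ)
    (W2 : Fin l1 → Fin l2 → ℝ) (b2 : Fin l2 → ℝ) (a : Fin l2 → ℝ) (c : ℝ)
    (ha : ∀ i, a i ≤ 0) (hc : 0 ≤ c) (hW2 : ∀ j i, W2 j i ≤ 0) (hb2 : ∀ i, 0 ≤ b2 i)
    (Xp Xm : Set (Fin n → ℝ)) (hfp : Xp.Finite) (hfm : Xm.Finite)
    (hp : ∀ x ∈ Xp, 0 <
      (∑ i, a i * max 0 ((∑ j, W2 j i * max 0 ((∑ k, W1 j k * x k) + b1 j)) + b2 i)) + c)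
    (hm : ∀ x ∈ Xm,
      (∑ i, a i * max 0 ((∑ j, W2 j i * max 0 ((∑ k, W1 j k * x k) + b1 j)) + b2 i)) + c < 0) :
    (Xm = ⋃ I : Finset (Fin l2),
        {x ∈ Xm | (∑ i ∈ I, a i * ((∑ j, W2 j i * max 0 ((∑ k, W1 j k * x k) + b1 j)) + b2 i)) + c < 0}) ∧
    (∀ I : Finset (Fin l2),
      (∀ x ∈ Xp, 0 <
        (∑ i ∈ I, a i * ((∑ j, W2 j i * max 0 ((∑ k, W1 j k * x k) + b1 j)) + b2 i)) + c) ∧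
      (∀ x ∈ {x ∈ Xm | (∑ i ∈ I, a i * ((∑ j, W2 j i * max 0 ((∑ k, W1 j k * x k) + b1 j)) + b2 i)) + c < 0},
        (∑ i ∈ I, a i * ((∑ j, W2 j i * max 0 ((∑ k, W1 j k * x k) + b1 j)) + b2 i)) + c < 0) ∧
      Disjoint
        (convexHull ℝ {x ∈ Xm | (∑ i ∈ I, a i * ((∑ j, W2 j i * max 0 ((∑ k, W1 j k * x k) + b1 j)) + b2 i)) + c < 0})
        Xp) :=
  two_hidden_layer_decomposition_general n l1 l2 W1 b1 W2 b2 a c ha hW2 Xp Xm hp hm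
end
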